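/- Mean total progeny near criticality (the unnumbered Lemma preceding Lemma 15). If ρ ≠ 1, then for every m ∈ {1,…,d}, componentwise E(Y_n | Z_0 = e_m) = ((1 − ρ^{n+1})/(1 − ρ))·u_m·v·(1 + o_n), i.e. E(Y_{n,k} | Z_0 = e_m) = ((1 − ρ^{n+1})/(1 − ρ))·u_m v_k·(1 + o_n) for each k. -/
import Mathlib


open scoped BigOperators
open Filter

namespace GWPaper

/-- A `d`-type offspring law: for each type `k`, probability weights on `Fin d → ℕ`. -/
structure GW (d : ℕ) where
  p : Fin d → (Fin d → ℕ) → ℝ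
  p_nonneg : ∀ k i, 0 ≤ p k i
  p_sum : ∀ k, HasSum (p k) 1

variable {d : ℕ}

/-- The offspring probability generating function `f_k(s)`. -/
noncomputable def GW.f (g : GW d) (k : Fin d) (s : Fin d → ℝ) : ℝ :=
  ∑' i : Fin d → ℕ, g.p k i * ∏ l, s l ^ i l

/-- First-moment matrix `M(s)`, with entries `M_{kl}(s) = ∂ f_k(s)/∂ s_l`. -/
noncomputable def GW.M (g : GW d) (s : Fin d → ℝ) : Matrix (Fin d) (Fin d) ℝ :=
  Matrix.of fun k l => ∑' i : Fin d → ℕ, g.p k i * (i l : ℝ) *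
    ∏ j, s j ^ (i j - if j = l then 1 else 0)

/-- Second partial derivatives `∂² f_k(s) / ∂ s_l ∂ s_m`. -/
noncomputable def GW.D2 (g : GW d) (s : Fin d → ℝ) (k l m : Fin d) : ℝ :=
  ∑' i : Fin d → ℕ, g.p k i * (i l : ℝ) * ((i m : ℝ) - if l = m then 1 else 0) *
    ∏ j, s j ^ (i j - (if j = l then 1 else 0) - (if j = m then 1 else 0))

/-- Third partial derivatives `∂³ f_k(1) / ∂ s_l ∂ s_m ∂ s_j` at the point `1`. -/
noncomputable def GW.D3 (g : GW d) (k l m j : Fin d) : ℝ :=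
  ∑' i : Fin d → ℕ, g.p k i * (i l : ℝ) * ((i m : ℝ) - if l = m then 1 else 0) *
    ((i j : ℝ) - (if l = j then 1 else 0) - (if m = j then 1 else 0))

/-- The class `K(a,b,c,U)` of offspring p.g.f.'s. -/
structure MemK (a b c : ℝ) (U : ℕ) (g : GW d) : Prop where
  hA : ∀ k l, a ≤ ((g.M 1) ^ U) k l
  hB : b ≤ ∑ k, ∑ l, ∑ m, g.D2 1 k l m
  hC : ∑ k, ∑ l, ∑ m, ∑ j, g.D3 k l m j ≤ c

/-- Perron data `(ρ, u, v)` for a matrix `A`: positive Perron root, positive right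
eigenvector `u`, positive left eigenvector `v`, normalized by `u′v = u′1 = 1`. -/
structure PerronData (A : Matrix (Fin d) (Fin d) ℝ) (ρ : ℝ) (u v : Fin d → ℝ) : Prop where
  rho_pos : 0 < ρ
  u_pos : ∀ k, 0 < u k
  v_pos : ∀ k, 0 < v k
  right_eig : A.mulVec u = ρ • u
  left_eig : Matrix.vecMul v A = ρ • v
  norm_uv : ∑ k, u k * v k = 1
  norm_u : ∑ k, u k = 1

/-- Iterates `f_n` of the p.g.f. -/
noncomputable def GW.fIter (g : GW d) : ℕ → (Fin d → ℝ) → Fin d → ℝ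
  | 0, s => s
  | n+1, s => fun k => g.f k (g.fIter n s)

/-- `t_n(s)`: the p.g.f. of the total progeny `Y_n`, `t_0 = s`, `t_n = s·f(t_{n-1})`. -/
noncomputable def GW.t (g : GW d) (s : Fin d → ℝ) : ℕ → Fin d → ℝ
  | 0 => s
  | n+1 => fun k => s k * g.f k (g.t s n)

/-- `h_n(s)`: `h_0 = 0`, `h_n = s·f(h_{n-1})`. -/
noncomputable def GW.hn (g : GW d) (s : Fin d → ℝ) : ℕ → Fin d → ℝ
  | 0 => 0
  | n+1 => fun k => s k * g.f k (g.hn s n)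

/-- The extinction-probability vector `μ`: smallest fixed point of `f` in the cube. -/
structure IsExtinction (g : GW d) (μ : Fin d → ℝ) : Prop where
  nonneg : ∀ k, 0 ≤ μ k
  le_one : ∀ k, μ k ≤ 1
  fixed : ∀ k, g.f k μ = μ k
  smallest : ∀ w : Fin d → ℝ, (∀ k, 0 ≤ w k) → (∀ k, w k ≤ 1) →
    (∀ k, g.f k w = w k) → ∀ k, μ k ≤ w k

/-- `h* = h*(s)`: solution in the cube of `h = s·f(h)` (componentwise product). -/
structure IsHstar (g : GW d) (s hstar : Fin d → ℝ) : Prop where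
  nonneg : ∀ k, 0 ≤ hstar k
  le_one : ∀ k, hstar k ≤ 1
  fixed : ∀ k, hstar k = s k * g.f k hstar

/-- The quadratic form `q_k[s₀,x] = (1/2)·Σ_{l,m} (∂²f_k(s₀)/∂s_l∂s_m) x_l x_m`. -/
noncomputable def GW.q (g : GW d) (s0 x : Fin d → ℝ) (k : Fin d) : ℝ :=
  (1/2) * ∑ l, ∑ m, g.D2 s0 k l m * x l * x m

/-- `Q(s₀) = Σ_k v_k q_k[s₀,u]` (with `v`, `u` the Perron eigenvectors at `1`). -/
noncomputable def GW.Qof (g : GW d) (v u s0 : Fin d → ℝ) : ℝ :=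
  ∑ k, v k * g.q s0 u k

/-- Standing restrictions (Remark 1) and joint limits on a sequence
`(g_ν, ρ_ν, n_ν, s_ν)`, expressing `σ = (1/n, 1-ρ, 1-s) → 0` within the class. -/
structure SeqRegime (a b c : ℝ) (U : ℕ) (g : ℕ → GW d) (ρ : ℕ → ℝ)
    (n : ℕ → ℕ) (s : ℕ → Fin d → ℝ) (c1 c2 c3 : ℝ) : Prop where
  memK : ∀ ν, MemK a b c U (g ν)
  n_lim : Tendsto n atTop atTop
  rho_lim : Tendsto ρ atTop (nhds 1)
  s_pos : ∀ ν k, 0 < s ν k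
  s_lt_one : ∀ ν k, s ν k < 1
  s_lim : ∀ k, Tendsto (fun ν => s ν k) atTop (nhds 1)
  comparable_lo : ∀ ν k m, c1 * (1 - s ν m) ≤ 1 - s ν k
  comparable_hi : ∀ ν k m, 1 - s ν k ≤ c2 * (1 - s ν m)
  lower : ∀ ν k, c3 * min (|1 - ρ ν| / (n ν : ℝ)) (1 / ((n ν : ℝ))^2) ≤ 1 - s ν k


/-- The mean total progeny `E(Y_{n,k} | Z_0 = e_m)`. Since
`E(Z_{j,k} | Z_0 = e_m) = (M^j)_{mk}`, this equals `Σ_{j=0}^{n} (M^j)_{mk}`. -/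
noncomputable def GW.meanProgeny (g : GW d) (n : ℕ) (m k : Fin d) : ℝ :=
  ∑ j ∈ Finset.range (n + 1), ((g.M 1) ^ j) m k

lemma stoch_pow (P : Matrix (Fin d) (Fin d) ℝ)
    (hpos : ∀ k l, 0 ≤ P k l) (hrow : ∀ k, ∑ l, P k l = 1) (r : ℕ) :
    (∀ k l, 0 ≤ (P ^ r) k l) ∧ (∀ k, ∑ l, (P ^ r) k l = 1) := by
  induction r with
  | zero =>
    constructor
    · intro k l; simp [Matrix.one_apply]; split_ifs <;> norm_num
    · intro k; simp [Matrix.one_apply]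
  | succ r ih =>
    constructor
    · intro k l
      rw [pow_succ, Matrix.mul_apply]
      exact Finset.sum_nonneg fun i _ => mul_nonneg (ih.1 k i) (hpos i l)
    · intro k
      rw [pow_succ]
      simp only [Matrix.mul_apply]
      rw [Finset.sum_comm]
      calc ∑ i, ∑ l, (P ^ r) k i * P i l = ∑ i, (P ^ r) k i * ∑ l, P i l := by
            simp [Finset.mul_sum]
        _ = 1 := by simp [hrow, ih.2 k]

lemma osc_pow (hd : 0 < d) (Q : Matrix (Fin d) (Fin d) ℝ) (α : ℝ)
    (hlo : ∀ k l, α ≤ Q k l) (hrow : ∀ k, ∑ l, Q k l = 1) :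
    ∀ r k m m', (Q ^ r) m k - (Q ^ r) m' k ≤ (1 - d * α) ^ r := by
  intro r
  induction r with
  | zero =>
    intro k m m'
    simp only [pow_zero, Matrix.one_apply]
    split_ifs <;> norm_num
  | succ r ih =>
    intro k m m'
    obtain ⟨l0, -, hl0⟩ := Finset.exists_min_image Finset.univ (fun l => (Q ^ r) l k)
      ⟨⟨0, hd⟩, Finset.mem_univ _⟩
    have h0 : ∑ l, (Q m l - Q m' l) = 0 := by
      rw [Finset.sum_sub_distrib, hrow, hrow]; ring
    have key : (Q ^ (r+1)) m k - (Q ^ (r+1)) m' k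
        = ∑ l, (Q m l - Q m' l) * ((Q ^ r) l k - (Q ^ r) l0 k) := by
      simp only [mul_sub, sub_mul, Finset.sum_sub_distrib, ← Finset.sum_mul]
      rw [pow_succ', Matrix.mul_apply, Matrix.mul_apply, hrow m, hrow m']
      ring
    rw [key]
    have hsum : ∑ l, (Q m l - α) = 1 - d * α := by
      rw [Finset.sum_sub_distrib, hrow]
      simp [Finset.card_univ, mul_comm]
    calc ∑ l, (Q m l - Q m' l) * ((Q ^ r) l k - (Q ^ r) l0 k)
        ≤ ∑ l, (Q m l - α) * ((Q ^ r) l k - (Q ^ r) l0 k) := by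
          refine Finset.sum_le_sum fun l _ => ?_
          exact mul_le_mul_of_nonneg_right (by linarith [hlo m' l])
            (by linarith [hl0 l (Finset.mem_univ l)])
      _ ≤ ∑ l, (Q m l - α) * (1 - d * α) ^ r := by
          refine Finset.sum_le_sum fun l _ => ?_
          exact mul_le_mul_of_nonneg_left (ih k l l0) (by linarith [hlo m l])
      _ = (1 - d * α) ^ (r + 1) := by
          rw [← Finset.sum_mul, hsum, pow_succ']

lemma convex_comb_diff (hd : 0 < d) (w w' x : Fin d → ℝ) (B : ℝ)
    (hw : ∀ i, 0 ≤ w i) (hw1 : ∑ i, w i = 1)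
    (hw' : ∀ i, 0 ≤ w' i) (hw1' : ∑ i, w' i = 1)
    (hx : ∀ i i', x i - x i' ≤ B) :
    |∑ i, w i * x i - ∑ i, w' i * x i| ≤ B := by
  have key : ∀ (p q : Fin d → ℝ), (∀ i, 0 ≤ p i) → ∑ i, p i = 1 →
      (∀ i, 0 ≤ q i) → ∑ i, q i = 1 →
      ∑ i, p i * x i - ∑ i, q i * x i ≤ B := by
    intro p q hp hp1 hq hq1
    have h1 : ∑ i, p i * x i - ∑ i, q i * x i
        = ∑ i, ∑ i', p i * q i' * (x i - x i') := by
      have e1 : ∀ i, ∑ i', p i * q i' * (x i - x i')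
          = p i * x i - p i * ∑ i', q i' * x i' := by
        intro i
        simp only [show ∀ i', p i * q i' * (x i - x i')
            = p i * (q i' * x i) - p i * (q i' * x i') from fun i' => by ring]
        rw [Finset.sum_sub_distrib, ← Finset.mul_sum, ← Finset.mul_sum,
          ← Finset.sum_mul, hq1, one_mul]
      simp only [e1]
      rw [Finset.sum_sub_distrib, ← Finset.sum_mul, hp1, one_mul]
    rw [h1]
    calc ∑ i, ∑ i', p i * q i' * (x i - x i')
        ≤ ∑ i, ∑ i', p i * q i' * B := by
          refine Finset.sum_le_sum fun i _ => Finset.sum_le_sum fun i' _ => ?_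
          exact mul_le_mul_of_nonneg_left (hx i i') (mul_nonneg (hp i) (hq i'))
      _ = B := by
          simp only [show ∀ (i i' : Fin d), p i * q i' * B = p i * B * q i'
            from fun i i' => by ring, ← Finset.mul_sum, hq1, mul_one]
          rw [← Finset.sum_mul, hp1, one_mul]
  rw [abs_sub_le_iff]
  exact ⟨key w w' hw hw1 hw' hw1', key w' w hw' hw1' hw hw1⟩

lemma geom_fiber_sum (U : ℕ) (hU : 0 < U) (δ : ℝ) (hδ0 : 0 ≤ δ) (hδ1 : δ < 1) (N : ℕ) :
    ∑ j ∈ Finset.range N, δ ^ (j / U) ≤ U * (1 / (1 - δ)) := by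
  have hmaps : ∀ j ∈ Finset.range N, j / U ∈ Finset.range N := by
    intro j hj
    simp only [Finset.mem_range] at *
    exact lt_of_le_of_lt (Nat.div_le_self j U) hj
  rw [← Finset.sum_fiberwise_of_maps_to hmaps]
  have hinner : ∀ q ∈ Finset.range N,
      ∑ j ∈ Finset.filter (fun j => j / U = q) (Finset.range N), δ ^ (j / U)
        ≤ (U : ℝ) * δ ^ q := by
    intro q _
    have h1 : ∑ j ∈ Finset.filter (fun j => j / U = q) (Finset.range N), δ ^ (j / U)
        = (Finset.filter (fun j => j / U = q) (Finset.range N)).card * δ ^ q := by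
      rw [Finset.sum_congr rfl (fun j hj => by
        rw [(Finset.mem_filter.mp hj).2]), Finset.sum_const, nsmul_eq_mul]
    rw [h1]
    have hcard : (Finset.filter (fun j => j / U = q) (Finset.range N)).card ≤ U := by
      have hsub : Finset.filter (fun j => j / U = q) (Finset.range N)
          ⊆ Finset.Ico (q * U) (q * U + U) := by
        intro j hj
        obtain ⟨-, hq⟩ := Finset.mem_filter.mp hj
        rw [Finset.mem_Ico]
        constructor
        · calc q * U = (j / U) * U := by rw [hq]
            _ ≤ j := Nat.div_mul_le_self j U
        · have : j / U < q + 1 := by omega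
          have := (Nat.div_lt_iff_lt_mul hU).mp this
          rw [Nat.succ_mul] at this
          omega
      calc _ ≤ (Finset.Ico (q * U) (q * U + U)).card := Finset.card_le_card hsub
        _ = U := by rw [Nat.card_Ico]; omega
    exact mul_le_mul_of_nonneg_right (by exact_mod_cast hcard) (pow_nonneg hδ0 q)
  calc _ ≤ ∑ q ∈ Finset.range N, (U : ℝ) * δ ^ q := Finset.sum_le_sum hinner
    _ = (U : ℝ) * ∑ q ∈ Finset.range N, δ ^ q := by rw [Finset.mul_sum]
    _ ≤ (U : ℝ) * (1 / (1 - δ)) := by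
        refine mul_le_mul_of_nonneg_left ?_ (Nat.cast_nonneg U)
        have h1δ : (0:ℝ) < 1 - δ := by linarith
        have heq : (δ ^ N - 1)/(δ - 1) = (1 - δ ^ N)/(1 - δ) := by
          rw [div_eq_div_iff (by linarith) (by linarith)]; ring
        rw [geom_sum_eq hδ1.ne, heq]
        exact (div_le_div_iff_of_pos_right h1δ).mpr (by nlinarith [pow_nonneg hδ0 N])

lemma mulVec_pow_eig (M : Matrix (Fin d) (Fin d) ℝ) (ρ : ℝ) (u : Fin d → ℝ)
    (hMu : M.mulVec u = ρ • u) (r : ℕ) : (M ^ r).mulVec u = (ρ ^ r) • u := by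
  induction r with
  | zero => simp
  | succ r ih =>
    rw [pow_succ, ← Matrix.mulVec_mulVec, hMu, Matrix.mulVec_smul, ih, smul_smul, ← pow_succ']

lemma vecMul_pow_eig (M : Matrix (Fin d) (Fin d) ℝ) (ρ : ℝ) (v : Fin d → ℝ)
    (hvM : Matrix.vecMul v M = ρ • v) (r : ℕ) : Matrix.vecMul v (M ^ r) = (ρ ^ r) • v := by
  induction r with
  | zero => simp
  | succ r ih =>
    rw [pow_succ, ← Matrix.vecMul_vecMul, ih, Matrix.smul_vecMul, hvM, smul_smul, ← pow_succ]

/-- Lower bound on right eigenvector entries. -/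

lemma u_lower (M : Matrix (Fin d) (Fin d) ℝ) (ρ : ℝ) (u : Fin d → ℝ) (U : ℕ) (a : ℝ)
    (hρ0 : 0 < ρ) (hρ2 : ρ ≤ 2) (hu : ∀ k, 0 < u k)
    (hMu : M.mulVec u = ρ • u) (hu1 : ∑ k, u k = 1)
    (hA : ∀ k l, a ≤ (M ^ U) k l) (ha : 0 ≤ a) :
    ∀ k, a / 2 ^ U ≤ u k := by
  intro k
  have h1 : ρ ^ U * u k = ∑ l, (M ^ U) k l * u l := by
    have := congrFun (mulVec_pow_eig M ρ u hMu U) k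
    rw [Matrix.mulVec, dotProduct] at this
    simpa [Pi.smul_apply, smul_eq_mul] using this.symm
  have h2 : a ≤ ρ ^ U * u k := by
    rw [h1]
    calc a = ∑ l, a * u l := by rw [← Finset.mul_sum, hu1, mul_one]
      _ ≤ ∑ l, (M ^ U) k l * u l :=
        Finset.sum_le_sum fun l _ => mul_le_mul_of_nonneg_right (hA k l) (hu l).le
  have hρU : (0:ℝ) < ρ ^ U := pow_pos hρ0 U
  calc a / 2 ^ U ≤ a / ρ ^ U := by
        apply div_le_div_of_nonneg_left ha hρU
        exact pow_le_pow_left₀ hρ0.le hρ2 U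
    _ ≤ u k := by rw [div_le_iff₀ hρU]; linarith [h2]

/-- Lower bound on left eigenvector entries. -/

lemma v_lower (M : Matrix (Fin d) (Fin d) ℝ) (ρ : ℝ) (u v : Fin d → ℝ) (U : ℕ) (a : ℝ)
    (hρ0 : 0 < ρ) (hρ2 : ρ ≤ 2) (hu : ∀ k, 0 < u k) (hv : ∀ k, 0 < v k)
    (hvM : Matrix.vecMul v M = ρ • v) (hu1 : ∑ k, u k = 1)
    (huv : ∑ k, u k * v k = 1)
    (hA : ∀ k l, a ≤ (M ^ U) k l) (ha : 0 ≤ a) :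
    ∀ k, a / 2 ^ U ≤ v k := by
  intro k
  have hule : ∀ l, u l ≤ 1 := by
    intro l
    calc u l ≤ ∑ i, u i := Finset.single_le_sum (fun i _ => (hu i).le) (Finset.mem_univ l)
      _ = 1 := hu1
  have hvsum : 1 ≤ ∑ l, v l := by
    calc (1:ℝ) = ∑ l, u l * v l := huv.symm
      _ ≤ ∑ l, v l := Finset.sum_le_sum fun l _ => by
          nlinarith [hu l, hv l, hule l]
  have h1 : ρ ^ U * v k = ∑ l, v l * (M ^ U) l k := by
    have := congrFun (vecMul_pow_eig M ρ v hvM U) k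
    rw [Matrix.vecMul, dotProduct] at this
    simpa [Pi.smul_apply, smul_eq_mul] using this.symm
  have h2 : a ≤ ρ ^ U * v k := by
    rw [h1]
    calc a = a * 1 := (mul_one a).symm
      _ ≤ a * ∑ l, v l := by apply mul_le_mul_of_nonneg_left hvsum ha
      _ = ∑ l, a * v l := by rw [Finset.mul_sum]
      _ ≤ ∑ l, v l * (M ^ U) l k := Finset.sum_le_sum fun l _ => by
          rw [mul_comm a (v l)]
          exact mul_le_mul_of_nonneg_left (hA l k) (hv l).le
  have hρU : (0:ℝ) < ρ ^ U := pow_pos hρ0 U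
  calc a / 2 ^ U ≤ a / ρ ^ U := by
        apply div_le_div_of_nonneg_left ha hρU
        exact pow_le_pow_left₀ hρ0.le hρ2 U
    _ ≤ v k := by rw [div_le_iff₀ hρU]; linarith [h2]

lemma key_bound (hd : 0 < d) (M : Matrix (Fin d) (Fin d) ℝ)
    (ρ : ℝ) (u v : Fin d → ℝ) (U : ℕ) (hU : 0 < U) (a α γ δ : ℝ) (ha : 0 < a)
    (hM0 : ∀ k l, 0 ≤ M k l)
    (hρ0 : 0 < ρ) (hρ2 : ρ ≤ 2)
    (hu : ∀ k, 0 < u k) (hv : ∀ k, 0 < v k)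
    (hMu : M.mulVec u = ρ • u) (hvM : Matrix.vecMul v M = ρ • v)
    (huv : ∑ k, u k * v k = 1) (hu1 : ∑ k, u k = 1)
    (hA : ∀ k l, a ≤ (M ^ U) k l)
    (hα0 : 0 < α) (hαa : α ≤ a * (a / 2 ^ U) / 2 ^ U) (hαd : α ≤ 1 / (2 * d))
    (hγ : γ = 1 - d * α) (hδ : δ = (1 + γ) / 2) (hρδ : ρ ^ U * γ ≤ δ)
    (n : ℕ) (m k : Fin d) :
    |∑ j ∈ Finset.range (n+1), (M ^ j) m k
        - (∑ j ∈ Finset.range (n+1), ρ ^ j) * (u m * v k)|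
      ≤ (2 ^ U / a) * (2 ^ U * (U * (1 / (1 - δ)))) := by
  have hdR : (0:ℝ) < d := by exact_mod_cast hd
  have h2U : (0:ℝ) < 2 ^ U := by positivity
  set u0 : ℝ := a / 2 ^ U with hu0def
  have hu0 : 0 < u0 := div_pos ha h2U
  have hu_lo : ∀ l, u0 ≤ u l := u_lower M ρ u U a hρ0 hρ2 hu hMu hu1 hA ha.le
  have hu_le : ∀ l, u l ≤ 1 := fun l =>
    hu1 ▸ Finset.single_le_sum (fun i _ => (hu i).le) (Finset.mem_univ l)
  have hγ1 : γ < 1 := by rw [hγ]; nlinarith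
  have hγhalf : (1:ℝ)/2 ≤ γ := by
    rw [hγ]
    have h1 : (d:ℝ) * α ≤ (d:ℝ) * (1 / (2 * d)) := mul_le_mul_of_nonneg_left hαd hdR.le
    have h2 : (d:ℝ) * (1 / (2 * d)) = 1/2 := by field_simp
    linarith
  have hδ0 : 0 ≤ δ := by rw [hδ]; linarith
  have hδ1 : δ < 1 := by rw [hδ]; linarith
  -- the stochastic matrix P
  set P : Matrix (Fin d) (Fin d) ℝ :=
    Matrix.of (fun i l => ρ⁻¹ * ((u i)⁻¹ * (M i l * u l))) with hPdef
  have hPapp : ∀ i l, P i l = ρ⁻¹ * ((u i)⁻¹ * (M i l * u l)) := fun i l => rfl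
  have hP0 : ∀ i l, 0 ≤ P i l := fun i l => by
    rw [hPapp]
    exact mul_nonneg (inv_nonneg.mpr hρ0.le)
      (mul_nonneg (inv_nonneg.mpr (hu i).le) (mul_nonneg (hM0 i l) (hu l).le))
  have hMrow : ∀ i, ∑ l, M i l * u l = ρ * u i := by
    intro i
    have h := congrFun hMu i
    rw [Matrix.mulVec, dotProduct] at h
    simpa using h
  have hProw : ∀ i, ∑ l, P i l = 1 := by
    intro i
    simp only [hPapp]
    rw [← Finset.mul_sum, ← Finset.mul_sum, hMrow i]
    field_simp [(hu i).ne', hρ0.ne']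
  have hPpow : ∀ j i l, (P ^ j) i l = (ρ ^ j)⁻¹ * ((u i)⁻¹ * ((M ^ j) i l * u l)) := by
    intro j
    induction j with
    | zero =>
      intro i l
      by_cases h : i = l
      · subst h; simp [Matrix.one_apply, (hu i).ne']
      · simp [Matrix.one_apply, h]
    | succ j ih =>
      intro i l
      rw [pow_succ, Matrix.mul_apply]
      calc ∑ x, (P ^ j) i x * P x l
          = ∑ x, ((M ^ j) i x * M x l) * ((ρ ^ (j+1))⁻¹ * ((u i)⁻¹ * u l)) := by
            refine Finset.sum_congr rfl fun x _ => ?_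
            rw [ih i x, hPapp x l]
            field_simp [(hu x).ne', (hu i).ne', hρ0.ne']
            ring
        _ = (∑ x, (M ^ j) i x * M x l) * ((ρ ^ (j+1))⁻¹ * ((u i)⁻¹ * u l)) := by
            rw [Finset.sum_mul]
        _ = (ρ ^ (j+1))⁻¹ * ((u i)⁻¹ * ((M ^ (j+1)) i l * u l)) := by
            rw [← Matrix.mul_apply, ← pow_succ]
            ring
  -- Q = P^U has entries ≥ α
  have hQ := stoch_pow P hP0 hProw U
  have hQlo : ∀ i l, α ≤ (P ^ U) i l := by
    intro i l
    rw [hPpow U i l]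
    have hkey : (ρ ^ U)⁻¹ * ((u i)⁻¹ * ((M ^ U) i l * u l))
        = ((M ^ U) i l * u l) / (ρ ^ U * u i) := by
      field_simp
    rw [hkey, le_div_iff₀ (mul_pos (pow_pos hρ0 U) (hu i))]
    have hpow : ρ ^ U ≤ 2 ^ U := pow_le_pow_left₀ hρ0.le hρ2 U
    calc α * (ρ ^ U * u i) ≤ α * 2 ^ U := by
          apply mul_le_mul_of_nonneg_left _ hα0.le
          have h1 := mul_le_mul_of_nonneg_left (hu_le i) (pow_pos hρ0 U).le
          rw [mul_one] at h1
          linarith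
      _ ≤ (a * (a / 2 ^ U) / 2 ^ U) * 2 ^ U :=
          mul_le_mul_of_nonneg_right hαa h2U.le
      _ = a * u0 := by rw [hu0def, div_mul_cancel₀ _ h2U.ne']
      _ ≤ (M ^ U) i l * u l :=
          mul_le_mul (hA i l) (hu_lo l) hu0.le (ha.le.trans (hA i l))
  -- stationary vector π
  set π : Fin d → ℝ := fun l => u l * v l with hπdef
  have hπ0 : ∀ l, 0 ≤ π l := fun l => mul_nonneg (hu l).le (hv l).le
  have hπ1 : ∑ l, π l = 1 := huv
  have hvMrow : ∀ l, ∑ i, v i * M i l = ρ * v l := by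
    intro l
    have h := congrFun hvM l
    rw [Matrix.vecMul, dotProduct] at h
    simpa using h
  have hπP1 : ∀ l, ∑ i, π i * P i l = π l := by
    intro l
    simp only [hPapp, hπdef]
    calc ∑ i, (u i * v i) * (ρ⁻¹ * ((u i)⁻¹ * (M i l * u l)))
        = ∑ i, (v i * M i l) * (ρ⁻¹ * u l) := by
          refine Finset.sum_congr rfl fun i _ => ?_
          field_simp [(hu i).ne', hρ0.ne']
      _ = (∑ i, v i * M i l) * (ρ⁻¹ * u l) := by rw [Finset.sum_mul]
      _ = u l * v l := by rw [hvMrow l]; field_simp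
  have hπPj : ∀ j l, ∑ i, π i * (P ^ j) i l = π l := by
    intro j
    induction j with
    | zero => intro l; simp [Matrix.one_apply]
    | succ j ih =>
      intro l
      simp only [pow_succ, Matrix.mul_apply, Finset.mul_sum]
      rw [Finset.sum_comm]
      calc ∑ x, ∑ i, π i * ((P ^ j) i x * P x l)
          = ∑ x, (∑ i, π i * (P ^ j) i x) * P x l := by
            refine Finset.sum_congr rfl fun x _ => ?_
            rw [Finset.sum_mul]
            exact Finset.sum_congr rfl fun i _ => by ring
        _ = ∑ x, π x * P x l := by
            refine Finset.sum_congr rfl fun x _ => by rw [ih x]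
        _ = π l := hπP1 l
  -- per-term estimate
  have hstep : ∀ j, |(M ^ j) m k - ρ ^ j * (u m * v k)|
      ≤ (1/u0) * (2 ^ U * δ ^ (j / U)) := by
    intro j
    obtain ⟨q, t, hqdef, htdef⟩ : ∃ q t, q = j / U ∧ t = j % U := ⟨_, _, rfl, rfl⟩
    have hjeq : t + U * q = j := by rw [hqdef, htdef]; exact Nat.mod_add_div j U
    have hPj : (P : Matrix (Fin d) (Fin d) ℝ) ^ j = P ^ t * P ^ (U * q) := by
      rw [← pow_add, hjeq]
    have hosc : ∀ i i', (P ^ (U * q)) i k - (P ^ (U * q)) i' k ≤ γ ^ q := by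
      intro i i'
      have h := osc_pow hd (P ^ U) α hQlo hQ.2 q k i i'
      rwa [← pow_mul, ← hγ] at h
    have hPt := stoch_pow P hP0 hProw t
    have h1 : (P ^ j) m k = ∑ i, (P ^ t) m i * (P ^ (U * q)) i k := by
      rw [hPj, Matrix.mul_apply]
    have h2 : π k = ∑ i, (∑ l, π l * (P ^ t) l i) * (P ^ (U * q)) i k := by
      have e2 : ∀ l, (P ^ j) l k = ∑ i, (P ^ t) l i * (P ^ (U * q)) i k := fun l => by
        rw [hPj, Matrix.mul_apply]
      calc π k = ∑ l, π l * (P ^ j) l k := (hπPj j k).symm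
        _ = ∑ l, ∑ i, π l * ((P ^ t) l i * (P ^ (U * q)) i k) := by
            refine Finset.sum_congr rfl fun l _ => ?_
            rw [e2 l, Finset.mul_sum]
        _ = ∑ i, ∑ l, π l * ((P ^ t) l i * (P ^ (U * q)) i k) := Finset.sum_comm
        _ = ∑ i, (∑ l, π l * (P ^ t) l i) * (P ^ (U * q)) i k := by
            refine Finset.sum_congr rfl fun i _ => ?_
            rw [Finset.sum_mul]
            exact Finset.sum_congr rfl fun l _ => by ring
    have hw'0 : ∀ i, 0 ≤ ∑ l, π l * (P ^ t) l i := fun i =>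
      Finset.sum_nonneg fun l _ => mul_nonneg (hπ0 l) (hPt.1 l i)
    have hw'1 : ∑ i, ∑ l, π l * (P ^ t) l i = 1 := by
      rw [Finset.sum_comm]
      calc ∑ l, ∑ i, π l * (P ^ t) l i = ∑ l, π l * ∑ i, (P ^ t) l i := by
            simp [Finset.mul_sum]
        _ = 1 := by simp only [hPt.2]; simpa using hπ1
    have hPjπ : |(P ^ j) m k - π k| ≤ γ ^ q := by
      rw [h1, h2]
      exact convex_comb_diff hd _ _ _ _ (fun i => hPt.1 m i) (hPt.2 m) hw'0 hw'1 hosc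
    have hM : (M ^ j) m k = ρ ^ j * u m * ((P ^ j) m k) * (u k)⁻¹ := by
      rw [hPpow j m k]
      field_simp [(hu m).ne', (hu k).ne', hρ0.ne']
      try ring
    have heq : (M ^ j) m k - ρ ^ j * (u m * v k)
        = (ρ ^ j * u m * (u k)⁻¹) * ((P ^ j) m k - π k) := by
      rw [hM, hπdef]
      field_simp [(hu m).ne', (hu k).ne', hρ0.ne']
    rw [heq, abs_mul, abs_of_pos (mul_pos (mul_pos (pow_pos hρ0 j) (hu m))
      (inv_pos.mpr (hu k)))]
    have hA1 : ρ ^ j * u m * (u k)⁻¹ ≤ ρ ^ j * (1/u0) := by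
      have hinv : (u k)⁻¹ ≤ 1/u0 := by
        rw [one_div]
        exact inv_anti₀ hu0 (hu_lo k)
      have h := mul_le_mul (mul_le_mul_of_nonneg_left (hu_le m) (pow_pos hρ0 j).le)
        hinv (inv_pos.mpr (hu k)).le
        (by rw [mul_one]; exact (pow_pos hρ0 j).le)
      simpa [mul_one] using h
    have hρj : ρ ^ j * γ ^ q ≤ 2 ^ U * δ ^ q := by
      have hjj : ρ ^ j = ρ ^ t * (ρ ^ U) ^ q := by
        rw [← pow_mul, ← pow_add, hjeq]
      have hρt : ρ ^ t ≤ 2 ^ U := by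
        calc ρ ^ t ≤ 2 ^ t := pow_le_pow_left₀ hρ0.le hρ2 t
          _ ≤ 2 ^ U := by
              apply pow_le_pow_right₀ one_le_two
              rw [htdef]
              exact (Nat.mod_lt j hU).le
      have hmix : (ρ ^ U) ^ q * γ ^ q ≤ δ ^ q := by
        rw [← mul_pow]
        exact pow_le_pow_left₀ (mul_nonneg (pow_nonneg hρ0.le U) (by linarith)) hρδ q
      calc ρ ^ j * γ ^ q = ρ ^ t * ((ρ ^ U) ^ q * γ ^ q) := by rw [hjj]; ring
        _ ≤ 2 ^ U * δ ^ q := by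
            apply mul_le_mul hρt hmix
              (mul_nonneg (pow_nonneg (pow_nonneg hρ0.le U) q) (pow_nonneg (by linarith) q))
              h2U.le
    calc (ρ ^ j * u m * (u k)⁻¹) * |(P ^ j) m k - π k|
        ≤ (ρ ^ j * (1/u0)) * γ ^ q := by
          apply mul_le_mul hA1 hPjπ (abs_nonneg _)
            (mul_nonneg (pow_nonneg hρ0.le j) (one_div_pos.mpr hu0).le)
      _ = (1/u0) * (ρ ^ j * γ ^ q) := by ring
      _ ≤ (1/u0) * (2 ^ U * δ ^ q) := by
          apply mul_le_mul_of_nonneg_left hρj (one_div_pos.mpr hu0).le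
      _ = (1/u0) * (2 ^ U * δ ^ (j / U)) := by rw [hqdef]
  -- sum up
  have hsplit : ∑ j ∈ Finset.range (n+1), (M ^ j) m k
      - (∑ j ∈ Finset.range (n+1), ρ ^ j) * (u m * v k)
      = ∑ j ∈ Finset.range (n+1), ((M ^ j) m k - ρ ^ j * (u m * v k)) := by
    rw [Finset.sum_sub_distrib, Finset.sum_mul]
  rw [hsplit]
  calc |∑ j ∈ Finset.range (n+1), ((M ^ j) m k - ρ ^ j * (u m * v k))|
      ≤ ∑ j ∈ Finset.range (n+1), |(M ^ j) m k - ρ ^ j * (u m * v k)| :=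
        Finset.abs_sum_le_sum_abs _ _
    _ ≤ ∑ j ∈ Finset.range (n+1), (1/u0) * (2 ^ U * δ ^ (j / U)) :=
        Finset.sum_le_sum fun j _ => hstep j
    _ = (1/u0) * (2 ^ U * ∑ j ∈ Finset.range (n+1), δ ^ (j / U)) := by
        rw [Finset.mul_sum]
        simp [Finset.mul_sum]
    _ ≤ (1/u0) * (2 ^ U * (U * (1 / (1 - δ)))) := by
        apply mul_le_mul_of_nonneg_left _ (one_div_pos.mpr hu0).le
        apply mul_le_mul_of_nonneg_left (geom_fiber_sum U hU δ hδ0 hδ1 (n+1)) h2U.le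
    _ = (2 ^ U / a) * (2 ^ U * (U * (1 / (1 - δ)))) := by
        rw [hu0def, one_div_div]

lemma M_one_nonneg (g : GW d) : ∀ k l, 0 ≤ g.M 1 k l := by
  intro k l
  refine tsum_nonneg fun i => ?_
  refine mul_nonneg (mul_nonneg (g.p_nonneg k i) (Nat.cast_nonneg _)) ?_
  exact Finset.prod_nonneg fun j _ => by simp


/-- **Unnumbered Lemma preceding Lemma 15** (mean total progeny near criticality).
If `ρ ≠ 1`, then componentwise
`E(Y_n | Z_0 = e_m) = ((1−ρ^{n+1})/(1−ρ))·u_m·v·(1+o_n)` uniformly over `K`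
as `n → ∞`, `ρ → 1` jointly. -/
theorem lemma_mean_progeny
    (d : ℕ) (hd : 1 ≤ d) (a b c : ℝ) (U : ℕ)
    (ha : 0 < a) (hb : 0 < b) (hc : 0 < c)
    (g : ℕ → GW d) (ρ : ℕ → ℝ) (u v : ℕ → Fin d → ℝ) (n : ℕ → ℕ)
    (hK : ∀ ν, MemK a b c U (g ν))
    (hP : ∀ ν, PerronData ((g ν).M 1) (ρ ν) (u ν) (v ν))
    (hn : Tendsto n atTop atTop)
    (hρ : Tendsto ρ atTop (nhds 1))
    (hρne : ∀ ν, ρ ν ≠ 1) :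
    ∀ m k : Fin d,
      Tendsto (fun ν => (g ν).meanProgeny (n ν) m k /
          (((1 - ρ ν ^ (n ν + 1)) / (1 - ρ ν)) * (u ν m * v ν k)))
        atTop (nhds 1) := by
  intro m k
  have hdpos : 0 < d := hd
  have hdR : (0:ℝ) < d := by exact_mod_cast hdpos
  -- Step 1: a uniform primitivity exponent U' ≥ 1
  obtain ⟨U', hU', a', ha', hA'⟩ : ∃ U', 0 < U' ∧ ∃ a', 0 < a' ∧
      ∀ᶠ ν in atTop, ∀ k l, a' ≤ (((g ν).M 1) ^ U') k l := by
    rcases Nat.eq_zero_or_pos U with hU0 | hUpos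
    · rcases Nat.lt_or_ge d 2 with h2 | h2
      · -- d = 1
        have hd1 : d = 1 := by omega
        subst hd1
        refine ⟨1, one_pos, 1/2, by norm_num, ?_⟩
        filter_upwards [hρ.eventually (eventually_ge_nhds (by norm_num : (1:ℝ)/2 < 1))]
          with ν hν k' l'
        have h := congrFun (hP ν).right_eig k'
        simp only [Matrix.mulVec, dotProduct, Fin.sum_univ_one,
          Pi.smul_apply, smul_eq_mul] at h
        have hk' : k' = 0 := Subsingleton.elim _ _
        have hl' : l' = 0 := Subsingleton.elim _ _
        subst hk'; subst hl'
        have hM00 : (g ν).M 1 0 0 = ρ ν :=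
          mul_right_cancel₀ ((hP ν).u_pos 0).ne' h
        rw [pow_one, hM00]
        exact hν
      · -- d ≥ 2 contradicts U = 0
        exfalso
        have h := (hK 0).hA ⟨0, by omega⟩ ⟨1, by omega⟩
        rw [hU0, pow_zero, Matrix.one_apply_ne (by
          exact Fin.ne_of_val_ne (by norm_num))] at h
        linarith
    · exact ⟨U, hUpos, a, ha, Eventually.of_forall fun ν => (hK ν).hA⟩
  -- constants
  set α : ℝ := min (a' * (a' / 2 ^ U') / 2 ^ U') (1 / (2 * (d:ℝ))) with hαdef
  have hα0 : 0 < α := lt_min (by positivity) (by positivity)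
  set γ : ℝ := 1 - (d:ℝ) * α with hγdef
  set δ : ℝ := (1 + γ) / 2 with hδdef
  have hγ1 : γ < 1 := by
    rw [hγdef]
    nlinarith
  have hγδ : γ < δ := by rw [hδdef]; linarith
  set C : ℝ := (2 ^ U' / a') * (2 ^ U' * ((U' : ℝ) * (1 / (1 - δ)))) with hCdef
  set u0 : ℝ := a' / 2 ^ U' with hu0def
  have hu0 : 0 < u0 := by positivity
  -- eventual hypotheses
  have hev1 : ∀ᶠ ν in atTop, ρ ν ≤ 2 := hρ.eventually (eventually_le_nhds one_lt_two)
  have hev2 : ∀ᶠ ν in atTop, ρ ν ^ U' * γ ≤ δ := by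
    have hlim : Tendsto (fun ν => ρ ν ^ U' * γ) atTop (nhds (1 ^ U' * γ)) :=
      (hρ.pow U').mul_const γ
    rw [one_pow, one_mul] at hlim
    exact hlim.eventually (eventually_le_nhds hγδ)
  -- uniform bound
  have hbound : ∀ᶠ ν in atTop, |(g ν).meanProgeny (n ν) m k -
      (∑ j ∈ Finset.range (n ν + 1), ρ ν ^ j) * (u ν m * v ν k)| ≤ C := by
    filter_upwards [hA', hev1, hev2] with ν hAν hρ2ν hδν
    have hPν := hP ν
    have := key_bound hdpos ((g ν).M 1) (ρ ν) (u ν) (v ν) U' hU' a' α γ δ ha'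
      (M_one_nonneg (g ν)) hPν.rho_pos hρ2ν hPν.u_pos hPν.v_pos hPν.right_eig
      hPν.left_eig hPν.norm_uv hPν.norm_u hAν hα0 (min_le_left _ _)
      (min_le_right _ _) hγdef hδdef hδν (n ν) m k
    rw [hCdef]
    simpa [GW.meanProgeny, one_div] using this
  -- lower bound on u*v
  have huv_lo : ∀ᶠ ν in atTop, u0 * u0 ≤ u ν m * v ν k := by
    filter_upwards [hA', hev1] with ν hAν hρ2ν
    have hPν := hP ν
    have h1 := u_lower ((g ν).M 1) (ρ ν) (u ν) U' a' hPν.rho_pos hρ2ν hPν.u_pos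
      hPν.right_eig hPν.norm_u hAν ha'.le m
    have h2 := v_lower ((g ν).M 1) (ρ ν) (u ν) (v ν) U' a' hPν.rho_pos hρ2ν hPν.u_pos
      hPν.v_pos hPν.left_eig hPν.norm_u hPν.norm_uv hAν ha'.le k
    exact mul_le_mul h1 h2 hu0.le (lt_of_lt_of_le hu0 h1).le
  -- the geometric sum S
  set S : ℕ → ℝ := fun ν => ∑ j ∈ Finset.range (n ν + 1), ρ ν ^ j with hSdef
  have hS1 : ∀ ν, 1 ≤ S ν := by
    intro ν
    have h := Finset.single_le_sum (f := fun j => ρ ν ^ j)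
      (fun i _ => pow_nonneg (hP ν).rho_pos.le i)
      (Finset.mem_range.mpr (Nat.succ_pos (n ν)))
    simpa using h
  have hS_top : Tendsto S atTop atTop := by
    rw [tendsto_atTop]
    intro b
    obtain ⟨J, hJ⟩ : ∃ J : ℕ, b ≤ ((J:ℝ) + 1) * (1/2) :=
      ⟨2 * (⌈b⌉₊ + 1), by push_cast; linarith [Nat.le_ceil b]⟩
    have hρJ : ∀ᶠ ν in atTop, (1:ℝ)/2 ≤ ρ ν ^ J := by
      have hlim : Tendsto (fun ν => ρ ν ^ J) atTop (nhds (1 ^ J)) := hρ.pow J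
      rw [one_pow] at hlim
      exact hlim.eventually (eventually_ge_nhds (by norm_num))
    filter_upwards [hn.eventually_ge_atTop J, hρJ] with ν hnν hρJν
    have hρν := (hP ν).rho_pos
    have hterm : ∀ j ≤ J, (1:ℝ)/2 ≤ ρ ν ^ j := by
      intro j hj
      rcases le_or_gt (ρ ν) 1 with h1 | h1
      · exact le_trans hρJν (pow_le_pow_of_le_one hρν.le h1 hj)
      · calc (1:ℝ)/2 ≤ 1 := by norm_num
          _ ≤ ρ ν ^ j := one_le_pow₀ h1.le
    calc b ≤ ((J:ℝ)+1) * (1/2) := hJ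
      _ = ∑ _j ∈ Finset.range (J+1), (1/2 : ℝ) := by
          rw [Finset.sum_const, Finset.card_range]
          push_cast
          ring
      _ ≤ ∑ j ∈ Finset.range (J+1), ρ ν ^ j :=
          Finset.sum_le_sum fun j hj => hterm j (by
            have := Finset.mem_range.mp hj
            omega)
      _ ≤ S ν := Finset.sum_le_sum_of_subset_of_nonneg
          (Finset.range_subset_range.mpr (by omega))
          (fun j _ _ => pow_nonneg hρν.le j)
  have hSeq : ∀ ν, S ν = (1 - ρ ν ^ (n ν + 1)) / (1 - ρ ν) := by
    intro ν
    rw [hSdef]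
    simp only
    rw [geom_sum_eq (hρne ν)]
    rw [div_eq_div_iff (sub_ne_zero.mpr (hρne ν)) (sub_ne_zero.mpr (Ne.symm (hρne ν)))]
    ring
  set T : ℕ → ℝ := fun ν => ((1 - ρ ν ^ (n ν + 1)) / (1 - ρ ν)) * (u ν m * v ν k)
    with hTdef
  have hTS : ∀ ν, T ν = S ν * (u ν m * v ν k) := by
    intro ν
    rw [hTdef]
    simp only
    rw [hSeq ν]
  have hT_top : Tendsto T atTop atTop := by
    apply tendsto_atTop_mono' atTop ?_ (hS_top.const_mul_atTop (mul_pos hu0 hu0))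
    filter_upwards [huv_lo] with ν hν
    rw [hTS ν]
    calc u0 * u0 * S ν = S ν * (u0 * u0) := by ring
      _ ≤ S ν * (u ν m * v ν k) :=
          mul_le_mul_of_nonneg_left hν (by linarith [hS1 ν])
  have hratio : ∀ᶠ ν in atTop, |(g ν).meanProgeny (n ν) m k / T ν - 1| ≤ C / T ν := by
    filter_upwards [hbound, hT_top.eventually_ge_atTop 1] with ν h1 h2
    have hT0 : 0 < T ν := lt_of_lt_of_le one_pos h2
    have heq : (g ν).meanProgeny (n ν) m k / T ν - 1
        = ((g ν).meanProgeny (n ν) m k - T ν) / T ν := by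
      field_simp
    rw [heq, abs_div, abs_of_pos hT0]
    apply (div_le_div_iff_of_pos_right hT0).mpr
    rw [hTS ν]
    exact h1
  have h0 : Tendsto (fun ν => C / T ν) atTop (nhds 0) :=
    tendsto_const_nhds.div_atTop hT_top
  have h3 : Tendsto (fun ν => (g ν).meanProgeny (n ν) m k / T ν - 1) atTop (nhds 0) :=
    squeeze_zero_norm' (by simpa [Real.norm_eq_abs] using hratio) h0
  have h4 := h3.add_const 1
  simp only [sub_add_cancel, zero_add] at h4
  exact h4



end GWPaper
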